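/- The pairs of twins in the cluster graph for n-permutations partition into disjoint directed cycles (in the graph whose edges are double edges), and any such cycle passes through exactly n−1 distinct clusters. -/

import Mathlib

/-!
A permutation `x` of `[n]` whose first `n - 1` letters reduce to `σ` is determined by its last
entry `k`: the prefix is `k.succAbove ∘ σ`. Its first entry `k.succAbove (σ 0)` is adjacent to
`k` exactly when `k` is `castSucc (σ 0)` or `succ (σ 0)`, which gives a pair of twins over every
cluster `σ`. Since no other letter lies between the adjacent values `x₁` and `xₙ`, replacing `xₙ`
by `x₁` does not change the pattern of `x₂ ⋯ xₙ`, which therefore is `σ` read cyclically from its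
second letter, i.e. `σ * finRotate (n - 1)`. So the double edges form the graph of right
multiplication by an `(n - 1)`-cycle, all of whose orbits have length `n - 1`.
-/

/-- `reduce w` replaces each copy of the i-th smallest value of `w` by `i`. -/
def reduce {m : ℕ} (w : Fin m → ℕ) : Fin m → ℕ :=
  fun i => ((Finset.univ.image w).filter (fun v => v ≤ w i)).card

/-- The first `n-1` letters of a word of length `n`. -/
def firstw {n : ℕ} (w : Fin n → ℕ) : Fin (n - 1) → ℕ :=
  fun i => w (Fin.castLE (Nat.sub_le n 1) i)

/-- The last `n-1` letters of a word of length `n`. -/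
def lastw {n : ℕ} (w : Fin n → ℕ) : Fin (n - 1) → ℕ :=
  fun i => w ⟨i.val + 1, by have := i.isLt; omega⟩

/-- The word (with letters in `{1,…,n}`) associated with a permutation of `[n]`. -/
def permWord {n : ℕ} (x : Equiv.Perm (Fin n)) : Fin n → ℕ := fun i => (x i : ℕ) + 1

/-- The word of a permutation of `[n-1]` indexing a cluster. -/
def clusterWord {n : ℕ} (σ : Equiv.Perm (Fin (n - 1))) : Fin (n - 1) → ℕ :=
  fun i => (σ i : ℕ) + 1

/-- `x` is an edge of the cluster graph from `σ` to `τ`: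
`reduce(x₁⋯x_{n-1}) = σ` and `reduce(x₂⋯x_n) = τ`. -/
def isEdge {n : ℕ} (x : Equiv.Perm (Fin n)) (σ τ : Equiv.Perm (Fin (n - 1))) : Prop :=
  reduce (firstw (permWord x)) = clusterWord σ ∧ reduce (lastw (permWord x)) = clusterWord τ

/-- `x` is a permutation whose first and last entries differ by 1. -/
def isTwinEnd {n : ℕ} (hn : 2 ≤ n) (x : Equiv.Perm (Fin n)) : Prop :=
  (x ⟨0, by omega⟩ : ℕ) + 1 = x ⟨n - 1, by omega⟩ ∨
    (x ⟨n - 1, by omega⟩ : ℕ) + 1 = x ⟨0, by omega⟩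

open Finset Function Equiv

variable {m : ℕ}

theorem reduce_le_reduce_of_le (w : Fin m → ℕ) {i j : Fin m} (h : w i ≤ w j) :
    reduce w i ≤ reduce w j :=
  card_le_card (monotone_filter_right _ fun _ _ hv => hv.trans h)

theorem reduce_lt_reduce_of_lt (w : Fin m → ℕ) {i j : Fin m} (h : w i < w j) :
    reduce w i < reduce w j := by
  refine card_lt_card <| (ssubset_iff_of_subset <|
    monotone_filter_right _ fun _ _ hv => hv.trans h.le).2 ⟨w j, ?_, ?_⟩ <;> simp [h]

theorem reduce_lt_reduce_iff (w : Fin m → ℕ) (i j : Fin m) :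
    reduce w i < reduce w j ↔ w i < w j :=
  ⟨fun h => lt_of_not_ge fun h' => h.not_ge (reduce_le_reduce_of_le w h'),
    reduce_lt_reduce_of_lt w⟩

theorem reduce_eq_iff_strictMono (w : Fin m → ℕ) (σ : Perm (Fin m)) :
    reduce w = (fun i => (σ i : ℕ) + 1) ↔ StrictMono (w ∘ σ.symm) := by
  constructor
  · intro h a b hab
    show w (σ.symm a) < w (σ.symm b)
    rwa [← reduce_lt_reduce_iff, h, add_lt_add_iff_right, apply_symm_apply, apply_symm_apply]
  · intro h
    funext i
    calc reduce w i = #((univ.image (w ∘ σ.symm)).filter (· ≤ (w ∘ σ.symm) (σ i))) := by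
          rw [← image_image, image_univ_equiv]; simp [reduce]
      _ = #(univ.filter (· ≤ σ i)) := by
          rw [filter_image, card_image_of_injective _ h.injective]
          simp only [h.le_iff_le]
      _ = σ i + 1 := by rw [filter_ge_eq_Iic, Fin.card_Iic]

theorem Equiv.Perm.eq_of_strictMono_comp_symm {α : Type*} [LinearOrder α]
    {v : Fin m → α} {ρ τ : Perm (Fin m)} (hρ : StrictMono (v ∘ ρ.symm))
    (hτ : StrictMono (v ∘ τ.symm)) : ρ = τ := by
  have hrange : Set.range (v ∘ ρ.symm) = Set.range (v ∘ τ.symm) := by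
    rw [ρ.symm.surjective.range_comp, τ.symm.surjective.range_comp]
  have hv : Injective v := by simpa using hρ.injective.comp ρ.injective
  exact symm_bijective.injective <| DFunLike.coe_injective <|
    hv.comp_left <| (hρ.range_inj hτ).1 hrange

theorem lt_iff_lt_of_eq_off_adjacent {ι : Type*} {N : ℕ} {u u' : ι → Fin N} {p : ι}
    (heq : ∀ i ≠ p, u' i = u i) (hadj : (u p : ℕ) + 1 = u' p ∨ (u' p : ℕ) + 1 = u p)
    (hfresh : ∀ i ≠ p, u i ≠ u p ∧ u i ≠ u' p) (i j : ι) :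
    u i < u j ↔ u' i < u' j := by
  rcases eq_or_ne i p with hi | hi <;> rcases eq_or_ne j p with hj | hj
  · rw [hi, hj]; simp
  · have := hfresh j hj
    rw [hi, heq j hj]
    simp only [Fin.lt_def, ne_eq, Fin.ext_iff] at this ⊢
    omega
  · have := hfresh i hi
    rw [hj, heq i hi]
    simp only [Fin.lt_def, ne_eq, Fin.ext_iff] at this ⊢
    omega
  · rw [heq i hi, heq j hj]

theorem Equiv.mulRight_pow_apply {G : Type*} [Group G] (g a : G) (p : ℕ) :
    (Equiv.mulRight g ^ p) a = a * g ^ p := by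
  induction p with
  | zero => simp
  | succ p ih => rw [pow_succ', Perm.mul_apply, ih, pow_succ, ← mul_assoc]; rfl

theorem orderOf_finRotate_succ (k : ℕ) : orderOf (finRotate (k + 1)) = k + 1 := by
  cases k with
  | zero => exact orderOf_eq_one_iff.2 finRotate_one
  | succ k => rw [isCycle_finRotate.orderOf, support_finRotate, card_univ, Fintype.card_fin]

theorem isTwinEnd_iff (x : Perm (Fin (m + 2))) :
    isTwinEnd (Nat.le_add_left 2 m) x ↔
      (x 0 : ℕ) + 1 = x (Fin.last _) ∨ (x (Fin.last _) : ℕ) + 1 = x 0 :=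
  Iff.rfl

theorem isEdge_iff (x : Perm (Fin (m + 2))) (σ τ : Perm (Fin (m + 1))) :
    isEdge x σ τ ↔
      StrictMono (x ∘ Fin.castSucc ∘ σ.symm) ∧ StrictMono (x ∘ Fin.succ ∘ τ.symm) := by
  refine Iff.and ((reduce_eq_iff_strictMono _ σ).trans ?_)
    ((reduce_eq_iff_strictMono _ τ).trans ?_) <;>
  · simp only [StrictMono, comp_apply, firstw, lastw, permWord, add_lt_add_iff_right,
      Fin.val_fin_lt]
    rfl

theorem strictMono_succ_comp_symm_iff_of_isTwinEnd {x : Perm (Fin (m + 2))}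
    (hx : isTwinEnd (Nat.le_add_left 2 m) x) {σ τ : Perm (Fin (m + 1))}
    (hσ : StrictMono (x ∘ Fin.castSucc ∘ σ.symm)) :
    StrictMono (x ∘ Fin.succ ∘ τ.symm) ↔ τ = σ * finRotate (m + 1) := by
  set u' := x ∘ Fin.castSucc ∘ finRotate (m + 1)
  have hu' : StrictMono (u' ∘ (σ * finRotate (m + 1)).symm) := by
    convert hσ using 1
    ext i
    simp [u', Perm.mul_def]
  -- `u'` differs from `x ∘ succ` only in its last letter, `x 0` instead of `x (last _)`,
  -- and these two values are adjacent.
  have hlt : ∀ i j, x (Fin.succ i) < x (Fin.succ j) ↔ u' i < u' j := by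
    refine lt_iff_lt_of_eq_off_adjacent (p := Fin.last m) (fun i hi => ?_)
      (by simpa [u', finRotate_last, or_comm] using (isTwinEnd_iff x).1 hx)
      fun i hi => ⟨x.injective.ne ((Fin.succ_injective _).ne hi), by simp [u']⟩
    obtain ⟨j, rfl⟩ := Fin.exists_castSucc_eq.2 hi
    simp [u']
  have hsame : StrictMono (x ∘ Fin.succ ∘ τ.symm) ↔ StrictMono (u' ∘ τ.symm) := by
    simp only [StrictMono, comp_apply, hlt]
  rw [hsame]
  exact ⟨fun h => (Perm.eq_of_strictMono_comp_symm hu' h).symm, fun h => h ▸ hu'⟩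

def permSnoc (σ : Perm (Fin (m + 1))) (k : Fin (m + 2)) : Perm (Fin (m + 2)) :=
  finSuccEquivLast.trans (σ.optionCongr.trans (finSuccEquiv' k).symm)

@[simp]
theorem permSnoc_castSucc (σ : Perm (Fin (m + 1))) (k : Fin (m + 2)) (i : Fin (m + 1)) :
    permSnoc σ k (Fin.castSucc i) = k.succAbove (σ i) := by
  simp [permSnoc]

@[simp]
theorem permSnoc_last (σ : Perm (Fin (m + 1))) (k : Fin (m + 2)) :
    permSnoc σ k (Fin.last _) = k := by
  simp [permSnoc]

@[simp]
theorem permSnoc_zero (σ : Perm (Fin (m + 1))) (k : Fin (m + 2)) :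
    permSnoc σ k 0 = k.succAbove (σ 0) := by
  rw [← Fin.castSucc_zero, permSnoc_castSucc]

theorem strictMono_permSnoc_castSucc_comp_symm (σ : Perm (Fin (m + 1))) (k : Fin (m + 2)) :
    StrictMono (permSnoc σ k ∘ Fin.castSucc ∘ σ.symm) := by
  convert Fin.strictMono_succAbove k using 1
  ext i
  simp

theorem exists_twin_edges_iff (σ τ : Perm (Fin (m + 1))) :
    (∃ x y : Perm (Fin (m + 2)), x ≠ y ∧ isEdge x σ τ ∧ isEdge y σ τ ∧
      isTwinEnd (Nat.le_add_left 2 m) x ∧ isTwinEnd (Nat.le_add_left 2 m) y) ↔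
      τ = σ * finRotate (m + 1) := by
  constructor
  · rintro ⟨x, -, -, hx, -, htx, -⟩
    rw [isEdge_iff] at hx
    exact (strictMono_succ_comp_symm_iff_of_isTwinEnd htx hx.1).1 hx.2
  · rintro rfl
    -- The first entry of `permSnoc σ k` is `k.succAbove (σ 0)`, adjacent to `k` exactly for
    -- these two choices of `k`.
    have twin_succ : isTwinEnd (Nat.le_add_left 2 m) (permSnoc σ (σ 0).succ) :=
      (isTwinEnd_iff _).2 (Or.inl (by simp))
    have twin_castSucc : isTwinEnd (Nat.le_add_left 2 m) (permSnoc σ (σ 0).castSucc) :=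
      (isTwinEnd_iff _).2 (Or.inr (by simp))
    have edge {k} (hk : isTwinEnd (Nat.le_add_left 2 m) (permSnoc σ k)) :
        isEdge (permSnoc σ k) σ (σ * finRotate (m + 1)) :=
      (isEdge_iff _ _ _).2 ⟨strictMono_permSnoc_castSucc_comp_symm σ k,
        (strictMono_succ_comp_symm_iff_of_isTwinEnd hk
          (strictMono_permSnoc_castSucc_comp_symm σ k)).2 rfl⟩
    refine ⟨_, _, fun h => ?_, edge twin_succ, edge twin_castSucc, twin_succ, twin_castSucc⟩
    exact Fin.castSucc_lt_succ.ne' (by simpa using congrArg (· (Fin.last _)) h)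

/-- The double edges of the cluster graph (one edge per pair of twins) form the graph of
a permutation `f` of the clusters, all of whose cycles have length exactly `n-1`:
the double edges decompose into vertex-disjoint directed cycles of length `n-1`. -/
theorem double_edges_form_cycles (n : ℕ) (hn : 3 ≤ n) :
    ∃ f : Equiv.Perm (Equiv.Perm (Fin (n - 1))),
      (∀ σ τ : Equiv.Perm (Fin (n - 1)),
        (∃ x y : Equiv.Perm (Fin n), x ≠ y ∧ isEdge x σ τ ∧ isEdge y σ τ ∧
          isTwinEnd (by omega) x ∧ isTwinEnd (by omega) y) ↔ f σ = τ) ∧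
      (∀ σ, (f ^ (n - 1)) σ = σ ∧ ∀ m : ℕ, 0 < m → m < n - 1 → (f ^ m) σ ≠ σ) := by
  obtain ⟨k, rfl⟩ : ∃ k, n = k + 2 := ⟨n - 2, by omega⟩
  refine ⟨Equiv.mulRight (finRotate (k + 1)),
    fun σ τ => (exists_twin_edges_iff σ τ).trans eq_comm, fun σ => ⟨?_, fun p hp hpk => ?_⟩⟩
  · show (Equiv.mulRight _ ^ (k + 1)) σ = σ
    have hpow := pow_orderOf_eq_one (finRotate (k + 1))
    rw [orderOf_finRotate_succ] at hpow
    rw [mulRight_pow_apply, hpow, mul_one]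
  · rw [mulRight_pow_apply, Ne, mul_eq_left]
    exact pow_ne_one_of_lt_orderOf hp.ne' (by rwa [orderOf_finRotate_succ])
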